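/- arXiv:2510.00977 — 2 statements merged into one kernel-verified Lean document; each statement's English description precedes it below -/
import Mathlib

section
/- Let p ∈ (0, 1) and for each ε > 0 let X₁, X₂ be independent Bernoulli(p) random variables with values in {0,1}, μ̂ = (X₁ + X₂)/2, σ̂ = sqrt((1/2)·((X₁ − μ̂)² + (X₂ − μ̂)²)), and Y₁(ε) = (X₁ − μ̂)/(σ̂ + ε). Then for each x ∈ {0, 1}, the limit as ε → 0⁺ of E[Y₁(ε) | X₁ = x] equals x − p. In particular the 2-rollout group normalization yields, in the limit, the unbiased centered advantage x − p. -/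
open MeasureTheory ProbabilityTheory Filter Topology

/-!
For rewards in `{0, 1}` the empirical standard deviation of the pair is `|X₁ - X₂| / 2`, so the
normalized advantage is exactly `Y₁ ε = (X₁ - X₂) / (1 + 2ε)`. On `{X₁ = x}` this is
`(x - X₂) / (1 + 2ε)`, and independence turns its conditional mean into `(x - p) / (1 + 2ε)`,
which tends to `x - p`.
-/

lemma sqrt_half_sum_sq_sub_mean (a b : ℝ) :
    √((1 / 2) * ((a - (a + b) / 2) ^ 2 + (b - (a + b) / 2) ^ 2)) = |a - b| / 2 := by
  rw [show (1 / 2) * ((a - (a + b) / 2) ^ 2 + (b - (a + b) / 2) ^ 2) = ((a - b) / 2) ^ 2 by ring,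
    Real.sqrt_sq_eq_abs, abs_div, abs_two]

lemma pair_sub_mean_div_std_add_eq_of_mem_zero_one {a b : ℝ} (ha : a = 0 ∨ a = 1)
    (hb : b = 0 ∨ b = 1) (ε : ℝ) :
    (a - (a + b) / 2) / (√((1 / 2) * ((a - (a + b) / 2) ^ 2 + (b - (a + b) / 2) ^ 2)) + ε) =
      (a - b) / (1 + 2 * ε) := by
  rw [sqrt_half_sum_sq_sub_mean, show |a - b| / 2 + ε = (|a - b| + 2 * ε) / 2 by ring]
  rcases ha with rfl | rfl <;> rcases hb with rfl | rfl <;> norm_num [div_div_eq_mul_div]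

lemma indicator_one_eq_self_of_mem_zero_one {α : Type*} {f : α → ℝ}
    (hf : ∀ a, f a = 0 ∨ f a = 1) :
    {a | f a = 1}.indicator 1 = f := by
  ext a
  rcases hf a with h | h <;> simp [h]

section ZeroOne

variable {Ω : Type*} [MeasurableSpace Ω] {μ : Measure Ω} {X : Ω → ℝ}

lemma integrable_of_mem_zero_one [IsFiniteMeasure μ] (hXm : Measurable X)
    (hX : ∀ ω, X ω = 0 ∨ X ω = 1) : Integrable X μ := by
  rw [← indicator_one_eq_self_of_mem_zero_one hX]
  exact (integrable_const 1).indicator (hXm (measurableSet_singleton 1))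

lemma integral_eq_measureReal_of_mem_zero_one (hXm : Measurable X)
    (hX : ∀ ω, X ω = 0 ∨ X ω = 1) : ∫ ω, X ω ∂μ = μ.real {ω | X ω = 1} := by
  conv_lhs => rw [← indicator_one_eq_self_of_mem_zero_one hX]
  exact integral_indicator_one (hXm (measurableSet_singleton 1))

lemma measureReal_setOf_eq_zero_of_mem_zero_one [IsProbabilityMeasure μ] (hXm : Measurable X)
    (hX : ∀ ω, X ω = 0 ∨ X ω = 1) : μ.real {ω | X ω = 0} = 1 - μ.real {ω | X ω = 1} := by
  have : {ω | X ω = 0} = {ω | X ω = 1}ᶜ := by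
    ext ω
    rcases hX ω with h | h <;> simp [h]
  rw [this]
  exact probReal_compl_eq_one_sub (hXm (measurableSet_singleton 1))

end ZeroOne

lemma ProbabilityTheory.IndepFun.setIntegral_sub_eq_mul {Ω : Type*} [MeasurableSpace Ω]
    {μ : Measure Ω} [IsFiniteMeasure μ] {X Y : Ω → ℝ} (hXY : IndepFun X Y μ) (hX : Measurable X)
    (hY : Integrable Y μ) (x : ℝ) :
    ∫ ω in {ω | X ω = x}, (X ω - Y ω) ∂μ = μ.real {ω | X ω = x} * (x - ∫ ω, Y ω ∂μ) := by
  have hA : MeasurableSet {ω | X ω = x} := hX (measurableSet_singleton x)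
  have hYA : ∫ ω in {ω | X ω = x}, Y ω ∂μ = μ.real {ω | X ω = x} * ∫ ω, Y ω ∂μ :=
    ((IndepFun_iff_Indep X Y μ).1 hXY).setIntegral_eq_mul (f := id) hX.comap_le
      hY.aemeasurable ⟨{x}, measurableSet_singleton x, rfl⟩ aestronglyMeasurable_id
  rw [setIntegral_congr_fun hA (g := fun ω => x - Y ω) fun ω (hω : X ω = x) => by rw [hω],
    integral_sub (integrable_const x) hY.integrableOn, setIntegral_const, hYA, smul_eq_mul,
    mul_sub]

/-- As `ε → 0⁺`, the conditional expectation of the 2-rollout group-normalized advantage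
given `X₁ = x` tends to the unbiased centered advantage `x − p`. -/
theorem stmt_2 {Ω : Type*} [MeasurableSpace Ω] (μ : Measure Ω) [IsProbabilityMeasure μ]
    (p : ℝ) (hp : p ∈ Set.Ioo (0 : ℝ) 1)
    (X₁ X₂ : Ω → ℝ) (hX₁ : Measurable X₁) (hX₂ : Measurable X₂)
    (hindep : IndepFun X₁ X₂ μ)
    (hval₁ : ∀ ω, X₁ ω = 0 ∨ X₁ ω = 1) (hval₂ : ∀ ω, X₂ ω = 0 ∨ X₂ ω = 1)
    (hp₁ : μ {ω | X₁ ω = 1} = ENNReal.ofReal p)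
    (hp₂ : μ {ω | X₂ ω = 1} = ENNReal.ofReal p)
    (Y₁ : ℝ → Ω → ℝ)
    (hY₁ : ∀ ε ω, Y₁ ε ω = (X₁ ω - (X₁ ω + X₂ ω) / 2) /
      (Real.sqrt ((1 / 2) * ((X₁ ω - (X₁ ω + X₂ ω) / 2) ^ 2
        + (X₂ ω - (X₁ ω + X₂ ω) / 2) ^ 2)) + ε)) :
    ∀ x ∈ ({0, 1} : Set ℝ),
      Tendsto (fun ε => (∫ ω in {ω | X₁ ω = x}, Y₁ ε ω ∂μ) / (μ {ω | X₁ ω = x}).toReal)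
        (nhdsWithin 0 (Set.Ioi 0)) (nhds (x - p)) := by
  obtain ⟨hp0, hp1⟩ := hp
  have hP₁ : μ.real {ω | X₁ ω = 1} = p := by
    rw [measureReal_def, hp₁, ENNReal.toReal_ofReal hp0.le]
  have hEX₂ : ∫ ω, X₂ ω ∂μ = p := by
    rw [integral_eq_measureReal_of_mem_zero_one hX₂ hval₂, measureReal_def, hp₂,
      ENNReal.toReal_ofReal hp0.le]
  intro x hx
  have hPx : μ.real {ω | X₁ ω = x} ≠ 0 := by
    rcases hx with rfl | rfl
    · rw [measureReal_setOf_eq_zero_of_mem_zero_one hX₁ hval₁, hP₁]; linarith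
    · rw [hP₁]; exact hp0.ne'
  have hcond (ε : ℝ) : (∫ ω in {ω | X₁ ω = x}, Y₁ ε ω ∂μ) / (μ {ω | X₁ ω = x}).toReal =
      (x - p) / (1 + 2 * ε) := by
    simp_rw [hY₁, pair_sub_mean_div_std_add_eq_of_mem_zero_one (hval₁ _) (hval₂ _)]
    rw [integral_div, hindep.setIntegral_sub_eq_mul hX₁ (integrable_of_mem_zero_one hX₂ hval₂),
      hEX₂, ← measureReal_def]
    field_simp
  simp_rw [hcond]
  refine tendsto_nhdsWithin_of_tendsto_nhds ?_
  have hcont : ContinuousAt (fun ε : ℝ => (x - p) / (1 + 2 * ε)) 0 := by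
    fun_prop (disch := norm_num)
  simpa using hcont.tendsto
end

section
/- Let p ∈ (0, 1), ε > 0, and let (X_k)_{k ≥ 1} be an i.i.d. sequence of Bernoulli(p) random variables with values in {0, 1}. For each N ≥ 1 define μ̂_N = (1/(2N))·Σ_{k=1}^{2N} X_k, σ̂_N = sqrt((1/(2N))·Σ_{k=1}^{2N} (X_k − μ̂_N)²), and Y_N = (X₁ − μ̂_N)/(σ̂_N + ε). Then for each x ∈ {0, 1}, lim_{N→∞} E[Y_N | X₁ = x] = (x − p)/(sqrt(p·(1 − p)) + ε), where the conditional expectation given an event A with P(A) > 0 is E[Y_N·1_A]/P(A). -/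
/-!
By the strong law of large numbers the group mean `μ̂_N` tends to `p` almost surely. For
`{0,1}`-valued samples the empirical variance is `μ̂_N (1 - μ̂_N)`, so `σ̂_N → √(p(1-p))` and
`Y_N → (X₁ - p) / (√(p(1-p)) + ε)` almost surely. As `|X₁ - μ̂_N| ≤ 1`, `|Y_N| ≤ 1/ε`, so
dominated convergence applies on the event `{X₁ = x}`, where the limit is the constant
`(x - p) / (√(p(1-p)) + ε)`.
-/

open MeasureTheory ProbabilityTheory Filter Topology Finset

section ZeroOneValued

variable {Ω : Type*} {f : Ω → ℝ}

lemma eq_indicator_of_eq_zero_or_eq_one (hf : ∀ ω, f ω = 0 ∨ f ω = 1) :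
    f = {ω | f ω = 1}.indicator 1 := by
  funext ω
  rcases hf ω with h | h <;> simp [h]

open Classical in
lemma preimage_eq_of_eq_zero_or_eq_one (hf : ∀ ω, f ω = 0 ∨ f ω = 1) (s : Set ℝ) :
    f ⁻¹' s = (if (1 : ℝ) ∈ s then {ω | f ω = 1} else ∅) ∪
      (if (0 : ℝ) ∈ s then {ω | f ω = 1}ᶜ else ∅) := by
  conv_lhs => rw [eq_indicator_of_eq_zero_or_eq_one hf]
  exact Set.indicator_const_preimage_eq_union _ s 1

variable [MeasurableSpace Ω]

lemma identDistrib_of_eq_zero_or_eq_one {Ω' : Type*} [MeasurableSpace Ω'] {μ : Measure Ω}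
    {ν : Measure Ω'} [IsProbabilityMeasure μ] [IsProbabilityMeasure ν] {g : Ω' → ℝ}
    (hfm : Measurable f) (hgm : Measurable g) (hf : ∀ ω, f ω = 0 ∨ f ω = 1)
    (hg : ∀ ω, g ω = 0 ∨ g ω = 1) (hfg : μ {ω | f ω = 1} = ν {ω | g ω = 1}) :
    IdentDistrib f g μ ν := by
  refine ⟨hfm.aemeasurable, hgm.aemeasurable, Measure.ext fun s hs ↦ ?_⟩
  have hf1 : MeasurableSet {ω | f ω = 1} := hfm (measurableSet_singleton 1)
  have hg1 : MeasurableSet {ω | g ω = 1} := hgm (measurableSet_singleton 1)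
  rw [Measure.map_apply hfm hs, Measure.map_apply hgm hs, preimage_eq_of_eq_zero_or_eq_one hf,
    preimage_eq_of_eq_zero_or_eq_one hg]
  split_ifs <;> simp [prob_compl_eq_one_sub hf1, prob_compl_eq_one_sub hg1, hfg]

lemma integrable_of_eq_zero_or_eq_one {μ : Measure Ω} [IsFiniteMeasure μ] (hfm : Measurable f)
    (hf : ∀ ω, f ω = 0 ∨ f ω = 1) : Integrable f μ := by
  rw [eq_indicator_of_eq_zero_or_eq_one hf]
  exact (integrable_const 1).indicator (hfm (measurableSet_singleton 1))

lemma integral_of_eq_zero_or_eq_one {μ : Measure Ω} (hfm : Measurable f)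
    (hf : ∀ ω, f ω = 0 ∨ f ω = 1) : ∫ ω, f ω ∂μ = μ.real {ω | f ω = 1} := by
  conv_lhs => rw [eq_indicator_of_eq_zero_or_eq_one hf]
  exact integral_indicator_one (hfm (measurableSet_singleton 1))

lemma measureReal_setOf_eq_zero_of_eq_zero_or_eq_one {μ : Measure Ω} [IsProbabilityMeasure μ]
    (hfm : Measurable f) (hf : ∀ ω, f ω = 0 ∨ f ω = 1) :
    μ.real {ω | f ω = 0} = 1 - μ.real {ω | f ω = 1} := by
  have : {ω | f ω = 0} = {ω | f ω = 1}ᶜ := by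
    ext ω; rcases hf ω with h | h <;> simp [h]
  exact this ▸ probReal_compl_eq_one_sub (hfm (measurableSet_singleton 1))

lemma measureReal_setOf_eq_ne_zero {μ : Measure Ω} [IsProbabilityMeasure μ] {p x : ℝ}
    (hfm : Measurable f) (hf : ∀ ω, f ω = 0 ∨ f ω = 1)
    (hfp : μ {ω | f ω = 1} = ENNReal.ofReal p) (hp : p ∈ Set.Ioo 0 1) (hx : x ∈ ({0, 1} : Set ℝ)) :
    μ.real {ω | f ω = x} ≠ 0 := by
  have h1 : μ.real {ω | f ω = 1} = p := by
    rw [measureReal_def, hfp, ENNReal.toReal_ofReal hp.1.le]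
  obtain rfl | rfl : x = 0 ∨ x = 1 := hx
  · rw [measureReal_setOf_eq_zero_of_eq_zero_or_eq_one hfm hf, h1]
    linarith [hp.2]
  · exact h1 ▸ hp.1.ne'

end ZeroOneValued

noncomputable section

/- With `n = 2N` these are the paper's `μ̂_N`, `σ̂_N` and `Y_N`; the reward `X₁` is `x 0`. -/

def sampleMean (n : ℕ) (x : ℕ → ℝ) : ℝ := (1 / n) * ∑ k ∈ range n, x k

def sampleStd (n : ℕ) (x : ℕ → ℝ) : ℝ :=
  √((1 / n) * ∑ k ∈ range n, (x k - sampleMean n x) ^ 2)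

def normalizedReward (ε : ℝ) (n : ℕ) (x : ℕ → ℝ) : ℝ :=
  (x 0 - sampleMean n x) / (sampleStd n x + ε)

end

section SampleStatistics

variable {n : ℕ} {x : ℕ → ℝ} {ε : ℝ}

lemma sampleMean_mem_Icc (hx : ∀ k, x k ∈ Set.Icc 0 1) : sampleMean n x ∈ Set.Icc 0 1 := by
  rcases Nat.eq_zero_or_pos n with rfl | hn
  · simp [sampleMean]
  have hn' : (0 : ℝ) < n := Nat.cast_pos.2 hn
  have hsum : ∑ k ∈ range n, x k ≤ n := by
    simpa using Finset.sum_le_card_nsmul (range n) x 1 fun k _ ↦ (hx k).2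
  refine ⟨mul_nonneg (by positivity) (Finset.sum_nonneg fun k _ ↦ (hx k).1), ?_⟩
  rw [sampleMean, one_div, inv_mul_le_iff₀ hn', mul_one]
  exact hsum

lemma sampleStd_of_eq_zero_or_eq_one (hn : n ≠ 0) (hx : ∀ k, x k = 0 ∨ x k = 1) :
    sampleStd n x = √(sampleMean n x * (1 - sampleMean n x)) := by
  set m := sampleMean n x with hm
  have hn' : (n : ℝ) ≠ 0 := Nat.cast_ne_zero.2 hn
  have hsum : ∑ k ∈ range n, x k = n * m := by rw [hm, sampleMean]; field_simp
  -- uses `x k ^ 2 = x k`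
  have hsq : ∀ k, (x k - m) ^ 2 = x k - 2 * m * x k + m ^ 2 := by
    intro k; rcases hx k with h | h <;> rw [h] <;> ring
  rw [sampleStd, ← hm]
  simp only [hsq, Finset.sum_add_distrib, Finset.sum_sub_distrib, ← Finset.mul_sum, hsum,
    Finset.sum_const, Finset.card_range, nsmul_eq_mul]
  congr 1
  field_simp
  ring

lemma abs_normalizedReward_le (hx : ∀ k, x k ∈ Set.Icc 0 1) (hε : 0 < ε) :
    |normalizedReward ε n x| ≤ 1 / ε := by
  have hm := sampleMean_mem_Icc (n := n) hx
  have hnum : |x 0 - sampleMean n x| ≤ 1 :=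
    abs_sub_le_of_nonneg_of_le (hx 0).1 (hx 0).2 hm.1 hm.2
  have hstd : 0 ≤ sampleStd n x := Real.sqrt_nonneg _
  have hden : ε ≤ |sampleStd n x + ε| := by
    rw [abs_of_pos (by linarith)]
    linarith
  rw [normalizedReward, abs_div]
  exact div_le_div₀ zero_le_one hnum hε hden

lemma tendsto_normalizedReward {p : ℝ} (hx : ∀ k, x k = 0 ∨ x k = 1) (hε : 0 < ε)
    (h : Tendsto (sampleMean · x) atTop (𝓝 p)) :
    Tendsto (normalizedReward ε · x) atTop (𝓝 ((x 0 - p) / (√(p * (1 - p)) + ε))) := by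
  have hstd : Tendsto (sampleStd · x) atTop (𝓝 √(p * (1 - p))) := by
    refine ((h.mul (tendsto_const_nhds.sub h)).sqrt).congr' ?_
    filter_upwards [eventually_ne_atTop 0] with n hn
    exact (sampleStd_of_eq_zero_or_eq_one hn hx).symm
  exact (tendsto_const_nhds.sub h).div (hstd.add tendsto_const_nhds) (by positivity)

end SampleStatistics

section Probability

variable {Ω : Type*} [MeasurableSpace Ω] {μ : Measure Ω} {X : ℕ → Ω → ℝ}

lemma measurable_sampleMean (hX : ∀ k, Measurable (X k)) (n : ℕ) :
    Measurable fun ω ↦ sampleMean n (X · ω) :=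
  measurable_const.mul (Finset.measurable_sum _ fun k _ ↦ hX k)

lemma measurable_normalizedReward (hX : ∀ k, Measurable (X k)) (ε : ℝ) (n : ℕ) :
    Measurable fun ω ↦ normalizedReward ε n (X · ω) := by
  have hm := measurable_sampleMean hX n
  have hs : Measurable fun ω ↦ sampleStd n (X · ω) :=
    (measurable_const.mul (Finset.measurable_sum _ fun k _ ↦
      ((hX k).sub hm).pow_const 2)).sqrt
  exact ((hX 0).sub hm).div (hs.add measurable_const)

lemma ae_tendsto_sampleMean (hint : Integrable (X 0) μ)
    (hindep : Pairwise fun i j ↦ IndepFun (X i) (X j) μ)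
    (hident : ∀ i, IdentDistrib (X i) (X 0) μ μ) :
    ∀ᵐ ω ∂μ, Tendsto (sampleMean · (X · ω)) atTop (𝓝 μ[X 0]) := by
  filter_upwards [strong_law_ae_real X hint hindep hident] with ω hω
  simpa only [sampleMean, one_div, inv_mul_eq_div] using hω

lemma ae_tendsto_sampleMean_of_bernoulli [IsProbabilityMeasure μ] {p : ℝ} (hp : 0 ≤ p)
    (hX : ∀ k, Measurable (X k)) (hindep : Pairwise fun i j ↦ IndepFun (X i) (X j) μ)
    (hval : ∀ k ω, X k ω = 0 ∨ X k ω = 1) (hbern : ∀ k, μ {ω | X k ω = 1} = ENNReal.ofReal p) :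
    ∀ᵐ ω ∂μ, Tendsto (sampleMean · (X · ω)) atTop (𝓝 p) := by
  have hident i : IdentDistrib (X i) (X 0) μ μ := identDistrib_of_eq_zero_or_eq_one
    (hX i) (hX 0) (hval i) (hval 0) ((hbern i).trans (hbern 0).symm)
  have hmean : μ[X 0] = p := by
    rw [integral_of_eq_zero_or_eq_one (hX 0) (hval 0), measureReal_def, hbern 0,
      ENNReal.toReal_ofReal hp]
  simpa only [hmean] using ae_tendsto_sampleMean
    (integrable_of_eq_zero_or_eq_one (hX 0) (hval 0)) hindep hident

lemma tendsto_setIntegral_div_of_dominated_convergence [IsFiniteMeasure μ] {β : Type*}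
    [MeasurableSpace β] [MeasurableSingletonClass β] {F : ℕ → Ω → ℝ} {f : Ω → β} {g : β → ℝ}
    {C : ℝ} {x : β} (hf : Measurable f) (hF : ∀ n, AEStronglyMeasurable (F n) μ)
    (hbound : ∀ n ω, ‖F n ω‖ ≤ C) (hlim : ∀ᵐ ω ∂μ, Tendsto (F · ω) atTop (𝓝 (g (f ω))))
    (hx : μ.real {ω | f ω = x} ≠ 0) :
    Tendsto (fun n ↦ (∫ ω in {ω | f ω = x}, F n ω ∂μ) / μ.real {ω | f ω = x}) atTop
      (𝓝 (g x)) := by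
  have hA : MeasurableSet {ω | f ω = x} := hf (measurableSet_singleton x)
  have hconv : Tendsto (fun n ↦ ∫ ω in {ω | f ω = x}, F n ω ∂μ) atTop
      (𝓝 (∫ ω in {ω | f ω = x}, g (f ω) ∂μ)) :=
    tendsto_integral_of_dominated_convergence (fun _ ↦ C) (fun n ↦ (hF n).restrict)
      (integrable_const C) (fun n ↦ .of_forall (hbound n)) (ae_restrict_of_ae hlim)
  have hconst : ∫ ω in {ω | f ω = x}, g (f ω) ∂μ = μ.real {ω | f ω = x} * g x := by
    rw [setIntegral_congr_fun hA (g := fun _ ↦ g x) fun ω (hω : f ω = x) ↦ by rw [hω],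
      setIntegral_const, smul_eq_mul]
  simpa only [hconst, mul_div_cancel_left₀ _ hx] using hconv.div_const (μ.real {ω | f ω = x})

end Probability

/-- Convergence of the conditional expectation of the group-normalized advantage:
for `x ∈ {0,1}`, `E[Y_N | X₁ = x] → (x − p)/(sqrt(p(1−p)) + ε)` as `N → ∞`. -/
theorem stmt_5 {Ω : Type*} [MeasurableSpace Ω] (μ : Measure Ω) [IsProbabilityMeasure μ]
    (p ε : ℝ) (hp : p ∈ Set.Ioo (0 : ℝ) 1) (hε : 0 < ε)
    (X : ℕ → Ω → ℝ) (hXmeas : ∀ k, Measurable (X k))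
    (hindep : iIndepFun X μ)
    (hval : ∀ k ω, X k ω = 0 ∨ X k ω = 1)
    (hbern : ∀ k, μ {ω | X k ω = 1} = ENNReal.ofReal p)
    (μhat : ℕ → Ω → ℝ)
    (hμhat : ∀ N ω, μhat N ω = (1 / (2 * N : ℝ)) * ∑ k ∈ Finset.range (2 * N), X k ω)
    (σhat : ℕ → Ω → ℝ)
    (hσhat : ∀ N ω, σhat N ω =
      Real.sqrt ((1 / (2 * N : ℝ)) * ∑ k ∈ Finset.range (2 * N), (X k ω - μhat N ω) ^ 2))
    (Y : ℕ → Ω → ℝ)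
    (hY : ∀ N ω, Y N ω = (X 0 ω - μhat N ω) / (σhat N ω + ε)) :
    ∀ x ∈ ({0, 1} : Set ℝ),
      Tendsto (fun N => (∫ ω in {ω | X 0 ω = x}, Y N ω ∂μ) / (μ {ω | X 0 ω = x}).toReal)
        atTop (nhds ((x - p) / (Real.sqrt (p * (1 - p)) + ε))) := by
  have hYeq N : Y N = fun ω ↦ normalizedReward ε (2 * N) (X · ω) := by
    funext ω
    simp [hY, hσhat, hμhat, normalizedReward, sampleStd, sampleMean]
  have hlim : ∀ᵐ ω ∂μ, Tendsto (Y · ω) atTop (𝓝 ((X 0 ω - p) / (√(p * (1 - p)) + ε))) := by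
    filter_upwards [ae_tendsto_sampleMean_of_bernoulli hp.1.le hXmeas
      (fun i j hij ↦ hindep.indepFun hij) hval hbern] with ω hω
    simp only [hYeq]
    exact (tendsto_normalizedReward (hval · ω) hε hω).comp (tendsto_id.const_mul_atTop' two_pos)
  have hbound N ω : ‖Y N ω‖ ≤ 1 / ε := by
    rw [hYeq, Real.norm_eq_abs]
    refine abs_normalizedReward_le (fun k ↦ ?_) hε
    rcases hval k ω with h | h <;> simp [h]
  intro x hx
  exact tendsto_setIntegral_div_of_dominated_convergence
    (g := fun y ↦ (y - p) / (√(p * (1 - p)) + ε)) (hXmeas 0)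
    (fun N ↦ (hYeq N ▸ measurable_normalizedReward hXmeas ε (2 * N)).aestronglyMeasurable)
    hbound hlim (measureReal_setOf_eq_ne_zero (hXmeas 0) (hval 0) (hbern 0) hp hx)
end
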